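/- arXiv:2002.02386 — 4 statements merged into one kernel-verified Lean document; each statement's English description precedes it below -/
import Mathlib

section
/- The space 𝔉 of Fueter maps on ℝ⁴ is equal to the internal direct sum ℍ_l ⊕ (ℍ_l ∘ I₁) ⊕ (ℍ_l ∘ I₂); in particular 𝔉 is a 12-dimensional real subspace of End(ℝ⁴). -/
/-!
Right multiplications commute with left ones, so the Fueter operator sends `u ↦ q u a` to
`u ↦ q u σ(a)` with `σ(a) = a + e₁ a e₁ + e₂ a e₂ − e₃ a e₃`. The quaternion relations give
`σ(1) = σ(e₁) = σ(e₂) = 0` and `σ(e₃) = 4 e₃`. Hence the 12-dimensional space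
`ℍ_l ⊕ ℍ_l I₁ ⊕ ℍ_l I₂` lies in 𝔉, while the 4-dimensional `ℍ_l I₃` meets 𝔉 only in `0`;
inside the 16-dimensional `End(ℍ)` this forces `dim 𝔉 = 12` and the equality.
-/

open Quaternion

noncomputable section

/-- e₁ = −i. -/
def e1 : ℍ[ℝ] := ⟨0, -1, 0, 0⟩
/-- e₂ = −j. -/
def e2 : ℍ[ℝ] := ⟨0, 0, -1, 0⟩
/-- e₃ = −k. -/
def e3 : ℍ[ℝ] := ⟨0, 0, 0, -1⟩

/-- The subspace 𝔉 of Fueter maps: endomorphisms `L` of ℝ⁴ ≅ ℍ satisfying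
`L + I₁ L I₁ + I₂ L I₂ − I₃ L I₃ = 0`, where `Iₖ` is right multiplication
by `eₖ`. -/
def fueterSubmodule : Submodule ℝ (ℍ[ℝ] →ₗ[ℝ] ℍ[ℝ]) where
  carrier := {L | ∀ u : ℍ[ℝ],
    L u + L (u * e1) * e1 + L (u * e2) * e2 - L (u * e3) * e3 = 0}
  add_mem' := by
    intro a b ha hb u
    have h := congrArg₂ (· + ·) (ha u) (hb u)
    simp only [add_zero] at h
    simp only [LinearMap.add_apply, add_mul]
    abel_nf at h ⊢
    exact h
  zero_mem' := by
    intro u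
    simp
  smul_mem' := by
    intro c a ha u
    have h := ha u
    simp only [LinearMap.smul_apply, smul_mul_assoc, ← smul_add, ← smul_sub]
    rw [h, smul_zero]

namespace LinearMap

variable (R : Type*) {A : Type*} [CommSemiring R]

/-- Its range is `A_l ∘ R_a`, the space `ℍ_l ∘ Iₖ` when `a = eₖ`. -/
def mulLeftMulRight [Semiring A] [Algebra R A] (a : A) : A →ₗ[R] Module.End R A :=
  (LinearMap.mul R A).compr₂ (LinearMap.mulRight R a)

@[simp]
theorem mulLeftMulRight_apply_apply [Semiring A] [Algebra R A] (a q u : A) :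
    mulLeftMulRight R a q u = q * u * a :=
  rfl

theorem mulLeftMulRight_injective [Ring A] [Algebra R A] [NoZeroDivisors A] {a : A}
    (ha : a ≠ 0) : Function.Injective (mulLeftMulRight R a) := by
  refine (injective_iff_map_eq_zero _).2 fun q hq => ?_
  have hq1 : q * 1 * a = 0 := LinearMap.congr_fun hq 1
  simpa [ha] using hq1

end LinearMap

open LinearMap

theorem e1_mul_e1 : e1 * e1 = -1 := by
  ext <;> simp only [re_mul, imI_mul, imJ_mul, imK_mul, re_neg, imI_neg, imJ_neg, imK_neg] <;>
    simp [e1]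

theorem e2_mul_e2 : e2 * e2 = -1 := by
  ext <;> simp only [re_mul, imI_mul, imJ_mul, imK_mul, re_neg, imI_neg, imJ_neg, imK_neg] <;>
    simp [e2]

theorem e3_mul_e3 : e3 * e3 = -1 := by
  ext <;> simp only [re_mul, imI_mul, imJ_mul, imK_mul, re_neg, imI_neg, imJ_neg, imK_neg] <;>
    simp [e3]

/-- `(eₖ)` is a negatively oriented quaternionic basis: `e₁ e₂ = k = -e₃`. -/
theorem e1_mul_e2 : e1 * e2 = -e3 := by
  ext <;> simp only [re_mul, imI_mul, imJ_mul, imK_mul, re_neg, imI_neg, imJ_neg, imK_neg] <;>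
    simp [e1, e2, e3]

theorem e2_mul_e1 : e2 * e1 = e3 := by
  ext <;> simp only [re_mul, imI_mul, imJ_mul, imK_mul] <;> simp [e1, e2, e3]

theorem e2_mul_e3 : e2 * e3 = -e1 := by
  ext <;> simp only [re_mul, imI_mul, imJ_mul, imK_mul, re_neg, imI_neg, imJ_neg, imK_neg] <;>
    simp [e1, e2, e3]

theorem e3_mul_e2 : e3 * e2 = e1 := by
  ext <;> simp only [re_mul, imI_mul, imJ_mul, imK_mul] <;> simp [e1, e2, e3]

theorem e3_mul_e1 : e3 * e1 = -e2 := by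
  ext <;> simp only [re_mul, imI_mul, imJ_mul, imK_mul, re_neg, imI_neg, imJ_neg, imK_neg] <;>
    simp [e1, e2, e3]

theorem e1_mul_e3 : e1 * e3 = e2 := by
  ext <;> simp only [re_mul, imI_mul, imJ_mul, imK_mul] <;> simp [e1, e2, e3]

theorem e3_ne_zero : e3 ≠ 0 := fun h => by
  simpa [h] using e3_mul_e3

namespace Fueter

def defect (L : ℍ[ℝ] →ₗ[ℝ] ℍ[ℝ]) (u : ℍ[ℝ]) : ℍ[ℝ] :=
  L u + L (u * e1) * e1 + L (u * e2) * e2 - L (u * e3) * e3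

def symbol (a : ℍ[ℝ]) : ℍ[ℝ] :=
  a + e1 * a * e1 + e2 * a * e2 - e3 * a * e3

theorem defect_mulLeftMulRight (a q u : ℍ[ℝ]) :
    defect (mulLeftMulRight ℝ a q) u = q * u * symbol a := by
  simp only [defect, symbol, mulLeftMulRight_apply_apply, mul_add, mul_sub, mul_assoc]

theorem mulLeftMulRight_mem_fueterSubmodule {a : ℍ[ℝ]} (ha : symbol a = 0) (q : ℍ[ℝ]) :
    mulLeftMulRight ℝ a q ∈ fueterSubmodule := fun u => by
  rw [← defect, defect_mulLeftMulRight, ha, mul_zero]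

theorem symbol_one : symbol 1 = 0 := by
  simp only [symbol, mul_one, e1_mul_e1, e2_mul_e2, e3_mul_e3]
  abel

theorem symbol_e1 : symbol e1 = 0 := by
  simp only [symbol, e1_mul_e1, e2_mul_e1, e3_mul_e2, e3_mul_e1, neg_mul, e2_mul_e3, one_mul,
    neg_neg]
  abel

theorem symbol_e2 : symbol e2 = 0 := by
  simp only [symbol, e1_mul_e2, e3_mul_e1, e2_mul_e2, e3_mul_e2, e1_mul_e3, neg_mul, one_mul,
    neg_neg]
  abel

theorem symbol_e3 : symbol e3 = (4 : ℝ) • e3 := by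
  simp only [symbol, e1_mul_e3, e2_mul_e1, e2_mul_e3, neg_mul, e1_mul_e2, e3_mul_e3, one_mul,
    neg_neg]
  module

/-- The parametrisation `ℍ_l ⊕ (ℍ_l ∘ I₁) ⊕ (ℍ_l ∘ I₂) → End(ℍ)`. -/
def param : ℍ[ℝ] × ℍ[ℝ] × ℍ[ℝ] →ₗ[ℝ] Module.End ℝ ℍ[ℝ] :=
  (mulLeftMulRight ℝ 1).coprod ((mulLeftMulRight ℝ e1).coprod (mulLeftMulRight ℝ e2))

theorem param_apply (t : ℍ[ℝ] × ℍ[ℝ] × ℍ[ℝ]) (u : ℍ[ℝ]) :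
    param t u = t.1 * u + t.2.1 * (u * e1) + t.2.2 * (u * e2) := by
  simp [param, mul_assoc, add_assoc]

theorem param_injective : Function.Injective param := by
  refine (injective_iff_map_eq_zero _).2 fun ⟨p, q, r⟩ ht => ?_
  have h1 := LinearMap.congr_fun ht 1
  have h2 := LinearMap.congr_fun ht e1
  have h3 := LinearMap.congr_fun ht e2
  simp only [param_apply, LinearMap.zero_apply, Quaternion.ext_iff, re_add, imI_add, imJ_add,
    imK_add, re_mul, imI_mul, imJ_mul, imK_mul, re_zero, imI_zero, imJ_zero, imK_zero] at h1 h2 h3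
  simp only [re_one, mul_one, imI_one, mul_zero, sub_zero, imJ_one, imK_one, e1, mul_neg, neg_zero,
    sub_self, add_zero, sub_neg_eq_add, zero_add, e2, neg_neg, zero_sub] at h1 h2 h3
  simp only [Prod.mk_eq_zero, Quaternion.ext_iff, re_zero, imI_zero, imJ_zero, imK_zero]
  refine ⟨⟨?_, ?_, ?_, ?_⟩, ⟨?_, ?_, ?_, ?_⟩, ⟨?_, ?_, ?_, ?_⟩⟩ <;> linarith

theorem range_param_le : LinearMap.range param ≤ fueterSubmodule := by
  rintro _ ⟨⟨p, q, r⟩, rfl⟩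
  exact add_mem (mulLeftMulRight_mem_fueterSubmodule symbol_one p)
    (add_mem (mulLeftMulRight_mem_fueterSubmodule symbol_e1 q)
      (mulLeftMulRight_mem_fueterSubmodule symbol_e2 r))

theorem disjoint_fueterSubmodule_range_mulLeftMulRight_e3 :
    Disjoint fueterSubmodule (LinearMap.range (mulLeftMulRight ℝ e3)) := by
  rw [Submodule.disjoint_def]
  rintro _ hL ⟨q, rfl⟩
  have hq : q * 1 * ((4 : ℝ) • e3) = 0 := by
    rw [← symbol_e3, ← defect_mulLeftMulRight]
    exact hL 1
  simp [show q = 0 by simpa [e3_ne_zero] using hq]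

theorem finrank_fueterSubmodule_le : Module.finrank ℝ fueterSubmodule ≤ 12 := by
  have h :=
    Submodule.finrank_add_finrank_le_of_disjoint disjoint_fueterSubmodule_range_mulLeftMulRight_e3
  rw [LinearMap.finrank_range_of_inj (mulLeftMulRight_injective ℝ e3_ne_zero),
    Module.finrank_linearMap, Quaternion.finrank_eq_four] at h
  omega

theorem finrank_range_param : Module.finrank ℝ (LinearMap.range param) = 12 := by
  rw [LinearMap.finrank_range_of_inj param_injective, Module.finrank_prod, Module.finrank_prod,
    Quaternion.finrank_eq_four]

theorem range_param : LinearMap.range param = fueterSubmodule :=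
  Submodule.eq_of_le_of_finrank_le range_param_le
    (finrank_range_param ▸ finrank_fueterSubmodule_le)

end Fueter

/-- 𝔉 = ℍ_l ⊕ (ℍ_l ∘ I₁) ⊕ (ℍ_l ∘ I₂): every Fueter map decomposes uniquely as
`u ↦ q₀·u + q₁·(u·e₁) + q₂·(u·e₂)` with `q₀, q₁, q₂ ∈ ℍ`, and conversely every
such map is Fueter; moreover 𝔉 has real dimension 12. -/
theorem fueter_eq_directSum_and_finrank_eq_twelve :
    (∀ L : ℍ[ℝ] →ₗ[ℝ] ℍ[ℝ], L ∈ fueterSubmodule ↔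
      ∃! t : ℍ[ℝ] × ℍ[ℝ] × ℍ[ℝ], ∀ u : ℍ[ℝ],
        L u = t.1 * u + t.2.1 * (u * e1) + t.2.2 * (u * e2)) ∧
    Module.finrank ℝ fueterSubmodule = 12 := by
  refine ⟨fun L => ?_, Fueter.range_param ▸ Fueter.finrank_range_param⟩
  simp only [← Fueter.range_param, ← Fueter.param_apply, eq_comm (a := L _), ← LinearMap.ext_iff]
  exact Fueter.param_injective.mem_range_iff_existsUnique
end
end

section
/- For every g ∈ SU(4), i.e. every ℂ-linear map of ℂ⁴ that is unitary with determinant 1, the induced real-linear map of ℝ⁸ ≅ ℂ⁴ preserves Ψ₀ under pullback: Ψ₀(g v₁, g v₂, g v₃, g v₄) = Ψ₀(v₁, v₂, v₃, v₄) for all v₁, v₂, v₃, v₄ ∈ ℝ⁸. -/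
/- STATEMENT 5: Every ℂ-linear unitary map of ℂ⁴ ≅ ℝ⁸ with determinant 1
(i.e. every element of SU(4)) preserves Ψ₀ under pullback. -/

noncomputable section

abbrev V := Fin 8 → ℝ

/-- Coordinate 1-forms: (x⁰,x¹,x²,x³,y⁰,y¹,y²,y³) = (v 0, …, v 7). -/
def dd (i : Fin 8) : V → ℝ := fun v => v i

/-- Wedge of two 1-forms. -/
def w2 (f g : V → ℝ) : V → V → ℝ := fun u v => f u * g v - f v * g u

/-- Wedge of two alternating 2-forms. -/
def w22 (a b : V → V → ℝ) : V → V → V → V → ℝ := fun v1 v2 v3 v4 =>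
  a v1 v2 * b v3 v4 - a v1 v3 * b v2 v4 + a v1 v4 * b v2 v3 +
  a v2 v3 * b v1 v4 - a v2 v4 * b v1 v3 + a v3 v4 * b v1 v2

def ox1 : V → V → ℝ := fun u v => w2 (dd 0) (dd 1) u v + w2 (dd 2) (dd 3) u v
def ox2 : V → V → ℝ := fun u v => w2 (dd 0) (dd 2) u v - w2 (dd 1) (dd 3) u v
def ox3 : V → V → ℝ := fun u v => w2 (dd 0) (dd 3) u v + w2 (dd 1) (dd 2) u v
def oy1 : V → V → ℝ := fun u v => w2 (dd 4) (dd 5) u v + w2 (dd 6) (dd 7) u v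
def oy2 : V → V → ℝ := fun u v => w2 (dd 4) (dd 6) u v - w2 (dd 5) (dd 7) u v
def oy3 : V → V → ℝ := fun u v => w2 (dd 4) (dd 7) u v + w2 (dd 5) (dd 6) u v

/-- Ψ₀ = dx⁰¹²³ + dy⁰¹²³ + ω₁ˣ∧ω₁ʸ + ω₂ˣ∧ω₂ʸ − ω₃ˣ∧ω₃ʸ. -/
def Psi0 : V → V → V → V → ℝ := fun v1 v2 v3 v4 =>
  w22 (w2 (dd 0) (dd 1)) (w2 (dd 2) (dd 3)) v1 v2 v3 v4 +
  w22 (w2 (dd 4) (dd 5)) (w2 (dd 6) (dd 7)) v1 v2 v3 v4 +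
  w22 ox1 oy1 v1 v2 v3 v4 + w22 ox2 oy2 v1 v2 v3 v4 - w22 ox3 oy3 v1 v2 v3 v4

/-- The identification ℝ⁸ ≅ ℂ⁴, z₁ = x⁰+ix¹, z₂ = x²+ix³, z₃ = y⁰+iy¹, z₄ = y²+iy³. -/
def toC (v : V) : Fin 4 → ℂ := ![⟨v 0, v 1⟩, ⟨v 2, v 3⟩, ⟨v 4, v 5⟩, ⟨v 6, v 7⟩]

/-- The inverse identification ℂ⁴ ≅ ℝ⁸. -/
def toR (w : Fin 4 → ℂ) : V :=
  ![(w 0).re, (w 0).im, (w 1).re, (w 1).im, (w 2).re, (w 2).im, (w 3).re, (w 3).im]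

/-- The real-linear action of a complex 4×4 matrix on ℝ⁸ ≅ ℂ⁴. -/
def act (g : Matrix (Fin 4) (Fin 4) ℂ) (v : V) : V := toR (g.mulVec (toC v))


def cmat (v1 v2 v3 v4 : V) : Matrix (Fin 4) (Fin 4) ℂ :=
  Matrix.of fun i j => ![toC v1, toC v2, toC v3, toC v4] j i

def herm (u v : V) : ℂ := dotProduct (star (toC u)) (toC v)

def om (u v : V) : ℝ := (herm u v).im

set_option maxHeartbeats 1600000 in
lemma det4 (A : Matrix (Fin 4) (Fin 4) ℂ) :
    A.det =
      A 0 0 * (A 1 1 * (A 2 2 * A 3 3 - A 2 3 * A 3 2)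
             - A 1 2 * (A 2 1 * A 3 3 - A 2 3 * A 3 1)
             + A 1 3 * (A 2 1 * A 3 2 - A 2 2 * A 3 1))
    - A 0 1 * (A 1 0 * (A 2 2 * A 3 3 - A 2 3 * A 3 2)
             - A 1 2 * (A 2 0 * A 3 3 - A 2 3 * A 3 0)
             + A 1 3 * (A 2 0 * A 3 2 - A 2 2 * A 3 0))
    + A 0 2 * (A 1 0 * (A 2 1 * A 3 3 - A 2 3 * A 3 1)
             - A 1 1 * (A 2 0 * A 3 3 - A 2 3 * A 3 0)
             + A 1 3 * (A 2 0 * A 3 1 - A 2 1 * A 3 0))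
    - A 0 3 * (A 1 0 * (A 2 1 * A 3 2 - A 2 2 * A 3 1)
             - A 1 1 * (A 2 0 * A 3 2 - A 2 2 * A 3 0)
             + A 1 2 * (A 2 0 * A 3 1 - A 2 1 * A 3 0)) := by
  simp [Matrix.det_succ_row_zero, Fin.sum_univ_succ,
    show (Fin.succ 2 : Fin 4) = 3 from rfl,
    show Fin.succAbove (2 : Fin 4) 2 = 3 from rfl,
    show Fin.succAbove (1 : Fin 4) 2 = 3 from rfl,
    show (Fin.castSucc 2 : Fin 4) = 2 from rfl,
    show Fin.succAbove (3 : Fin 4) 2 = 2 from rfl]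
  ring

set_option maxHeartbeats 1600000 in
lemma key_identity (v1 v2 v3 v4 : V) :
    Psi0 v1 v2 v3 v4 = (cmat v1 v2 v3 v4).det.re +
      (om v1 v2 * om v3 v4 - om v1 v3 * om v2 v4 + om v1 v4 * om v2 v3) := by
  simp only [Psi0, w22, w2, dd, ox1, ox2, ox3, oy1, oy2, oy3, cmat, om, herm,
    dotProduct, Fin.sum_univ_four, det4, Matrix.of_apply,
    toC, Matrix.cons_val_zero, Matrix.cons_val_one, Matrix.head_cons,
    Matrix.cons_val_two, Matrix.tail_cons, Matrix.cons_val_three, Matrix.head_fin_const,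
    Matrix.cons_val_fin_one, Pi.star_apply, Complex.star_def, Complex.mul_re, Complex.mul_im,
    Complex.add_re, Complex.add_im, Complex.sub_re, Complex.sub_im,
    Complex.conj_re, Complex.conj_im]
  ring

lemma toC_toR (w : Fin 4 → ℂ) : toC (toR w) = w := by
  funext i
  fin_cases i <;> rfl

lemma toC_act (g : Matrix (Fin 4) (Fin 4) ℂ) (v : V) :
    toC (act g v) = g.mulVec (toC v) := by
  simp [act, toC_toR]

lemma herm_act (g : Matrix (Fin 4) (Fin 4) ℂ) (hunitary : star g * g = 1) (u v : V) :
    herm (act g u) (act g v) = herm u v := by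
  simp only [herm, toC_act, Matrix.star_mulVec]
  rw [Matrix.dotProduct_mulVec, Matrix.vecMul_vecMul, ← Matrix.star_eq_conjTranspose,
    hunitary, Matrix.vecMul_one]

lemma cmat_act (g : Matrix (Fin 4) (Fin 4) ℂ) (v1 v2 v3 v4 : V) :
    cmat (act g v1) (act g v2) (act g v3) (act g v4) = g * cmat v1 v2 v3 v4 := by
  ext i j
  fin_cases j <;>
    simp [cmat, toC_act, Matrix.mul_apply, Matrix.mulVec, dotProduct]

theorem SU4_preserves_Psi0 (g : Matrix (Fin 4) (Fin 4) ℂ)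
    (hunitary : star g * g = 1) (hdet : g.det = 1) :
    ∀ v1 v2 v3 v4 : V,
      Psi0 (act g v1) (act g v2) (act g v3) (act g v4) = Psi0 v1 v2 v3 v4 := by
  intro v1 v2 v3 v4
  rw [key_identity, key_identity, cmat_act, Matrix.det_mul, hdet, one_mul]
  simp only [om, herm_act g hunitary]
end
end

section
/- Let B₀ be the ℍ-valued 1-form on ℝ⁴ ≅ ℍ defined by B₀(x)(u) = Im(x·ū)/(1 + |x|²) for x, u ∈ ℍ. Then B₀ is smooth and its curvature F = dB₀ + B₀∧B₀ is given by F(x)(u, v) = (u·v̄ − v·ū)/(1 + |x|²)² for all x, u, v ∈ ℍ. -/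
/- STATEMENT 11: The standard ASD connection matrix B₀(x)(u) = Im(x·ū)/(1+|x|²) on
ℝ⁴ ≅ ℍ is smooth, with curvature F = dB₀ + B₀∧B₀ given by
F(x)(u,v) = (u·v̄ − v·ū)/(1+|x|²)². -/

open Quaternion

noncomputable section

/-- The standard ASD instanton connection form on ℝ⁴ ≅ ℍ. -/
def B0 : ℍ[ℝ] → ℍ[ℝ] → ℍ[ℝ] := fun x u => ((1 + ‖x‖ ^ 2)⁻¹ : ℝ) • (x * star u).im

/-!
Write `s = 1 + |x|²`, so that `B₀(x)(u) = s⁻¹ Im(x ū)`. Differentiating in `x` gives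
`dB₀(u, v) = s⁻¹ (u v̄ - v ū) - 2 s⁻² (⟨x, u⟩ Im(x v̄) - ⟨x, v⟩ Im(x ū))`, while
`B₀ ∧ B₀ = s⁻² [Im(x ū), Im(x v̄)]`. The quaternion identity
`|x|² (u v̄ - v ū) + [Im(x ū), Im(x v̄)] = 2 ⟨x, u⟩ Im(x v̄) - 2 ⟨x, v⟩ Im(x ū)`
collapses the sum to `(s⁻¹ - s⁻² |x|²) (u v̄ - v ū) = s⁻² (u v̄ - v ū)`.
-/

namespace Quaternion

section CommRing

variable {R : Type*} [CommRing R]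

instance [Star R] [TrivialStar R] : StarModule R ℍ[R] :=
  ⟨fun r a => by rw [star_trivial r]; exact star_smul r a⟩

theorem im_mul_star_sub_im_mul_star (u v : ℍ[R]) :
    (u * star v).im - (v * star u).im = u * star v - v * star u := by
  ext <;> simp
  all_goals ring

theorem normSq_smul_add_commutator_im_mul_star (x u v : ℍ[R]) :
    normSq x • (u * star v - v * star u) +
        ((x * star u).im * (x * star v).im - (x * star v).im * (x * star u).im) =
      (2 * (x * star u).re) • (x * star v).im - (2 * (x * star v).re) • (x * star u).im := by
  rw [normSq_def']
  ext <;> simp <;> ring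

end CommRing

def imCLM : ℍ[ℝ] →L[ℝ] ℍ[ℝ] :=
  LinearMap.toContinuousLinearMap
    { toFun := im, map_add' := im_add, map_smul' := fun r a => im_smul a r }

@[simp] theorem imCLM_apply (q : ℍ[ℝ]) : imCLM q = q.im := rfl

end Quaternion

theorem hasFDerivAt_inv_one_add_norm_sq {E : Type*} [NormedAddCommGroup E]
    [InnerProductSpace ℝ E] (x : E) :
    HasFDerivAt (fun y : E => (1 + ‖y‖ ^ 2)⁻¹)
      (-(2 * ((1 + ‖x‖ ^ 2) ^ 2)⁻¹) • innerSL ℝ x) x := by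
  refine ((hasFDerivAt_inv (by positivity)).comp x
    ((hasFDerivAt_id x).norm_sq.const_add 1)).congr_fderiv ?_
  ext u
  simp
  ring

theorem contDiff_B0 : ContDiff ℝ (⊤ : ℕ∞) (fun p : ℍ[ℝ] × ℍ[ℝ] => B0 p.1 p.2) := by
  have hs : ContDiff ℝ (⊤ : ℕ∞) (fun p : ℍ[ℝ] × ℍ[ℝ] => (1 + ‖p.1‖ ^ 2)⁻¹) :=
    (contDiff_const.add (contDiff_fst.norm_sq ℝ)).inv fun _ => by positivity
  have him : ContDiff ℝ (⊤ : ℕ∞) (fun p : ℍ[ℝ] × ℍ[ℝ] => (p.1 * star p.2).im) :=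
    imCLM.contDiff.comp (contDiff_fst.mul ((starL' ℝ).contDiff.comp contDiff_snd))
  exact hs.smul him

theorem fderiv_B0_left_apply (x u v : ℍ[ℝ]) :
    fderiv ℝ (fun y => B0 y v) x u =
      (1 + ‖x‖ ^ 2)⁻¹ • (u * star v).im -
        (2 * ((1 + ‖x‖ ^ 2) ^ 2)⁻¹ * inner ℝ x u) • (x * star v).im := by
  have h : HasFDerivAt (fun y => B0 y v) _ x := (hasFDerivAt_inv_one_add_norm_sq x).smul
    (imCLM ∘L (ContinuousLinearMap.mul ℝ ℍ[ℝ]).flip (star v)).hasFDerivAt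
  rw [h.fderiv]
  simp [sub_eq_add_neg]

theorem B0_smooth_and_curvature :
    ContDiff ℝ (⊤ : ℕ∞) (fun p : ℍ[ℝ] × ℍ[ℝ] => B0 p.1 p.2) ∧
    ∀ x u v : ℍ[ℝ],
      (fderiv ℝ (fun y => B0 y v) x u - fderiv ℝ (fun y => B0 y u) x v) +
          (B0 x u * B0 x v - B0 x v * B0 x u) =
        (((1 + ‖x‖ ^ 2) ^ 2)⁻¹ : ℝ) • (u * star v - v * star u) := by
  refine ⟨contDiff_B0, fun x u v => ?_⟩
  have hw := im_mul_star_sub_im_mul_star u v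
  have hc := normSq_smul_add_commutator_im_mul_star x u v
  rw [normSq_eq_norm_mul_self, ← sq, ← inner_def, ← inner_def] at hc
  rw [fderiv_B0_left_apply, fderiv_B0_left_apply]
  simp only [B0, smul_mul_smul_comm]
  linear_combination (norm := skip)
    ((1 + ‖x‖ ^ 2)⁻¹ : ℝ) • hw + (((1 + ‖x‖ ^ 2) ^ 2)⁻¹ : ℝ) • hc
  match_scalars <;> field_simp <;> ring
end
end

section
/- Let A₀(x, y)(u, w) = Im(|y|²·x⁻¹·u + |x|²·y⁻¹·w)/(|x|² + |y|²), defined for x, y ∈ ℍ∖{0}, and let g(x, y) = y/|y|. Then for all x, y ≠ 0 and all tangent vectors (u, w) ∈ ℍ²: g·A₀(x, y)(u, w)·ḡ − (Dg)(x, y)(u, w)·ḡ = Im( y·x⁻¹·u·ȳ + y·w̄ )/(|x|² + |y|²), where Dg is the Fréchet derivative of g as an ℍ-valued function. In particular, the right-hand side extends smoothly to the region {x ≠ 0}, removing the singularity of A₀ along y = 0. -/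
/-!
Conjugation by a quaternion commutes with taking imaginary parts, so conjugating by the unit
quaternion `g = y/|y|` gives `g A₀ ḡ = Im(y x⁻¹ u ȳ + (|x|²/|y|²) w ȳ)/(|x|² + |y|²)`.
Differentiating `y ↦ y/|y|` gives `(Dg) ḡ = Im(w ȳ)/|y|²`: the radial part of the derivative
cancels the real part `⟨y, w⟩/|y|²` of `w ȳ/|y|²`. In the difference the coefficient of
`Im(w ȳ)` collapses to `-1/(|x|² + |y|²)`, and `-Im(w ȳ) = Im(y w̄)`. The result involves no
inverse of `y`, so it is smooth wherever `x ≠ 0`.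
-/

open Quaternion

noncomputable section

/-- The standard G₂-instanton connection form on ℍ² ≅ ℝ⁸. -/
def A0 : ℍ[ℝ] × ℍ[ℝ] → ℍ[ℝ] × ℍ[ℝ] → ℍ[ℝ] := fun p t =>
  ((‖p.1‖ ^ 2 + ‖p.2‖ ^ 2)⁻¹ : ℝ) •
    ((‖p.2‖ ^ 2 : ℝ) • (p.1⁻¹ * t.1) + (‖p.1‖ ^ 2 : ℝ) • (p.2⁻¹ * t.2)).im

/-- The gauge transformation g(x,y) = y/|y|. -/
def gg : ℍ[ℝ] × ℍ[ℝ] → ℍ[ℝ] := fun p => (‖p.2‖⁻¹ : ℝ) • p.2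

section InnerProductSpace

variable {E : Type*} [NormedAddCommGroup E] [InnerProductSpace ℝ E]

theorem hasFDerivAt_norm_of_ne_zero {y : E} (hy : y ≠ 0) :
    HasFDerivAt (fun z : E => ‖z‖) (‖y‖⁻¹ • innerSL ℝ y) y := by
  have h := (hasStrictFDerivAt_norm_sq y).hasFDerivAt.sqrt (by positivity)
  simp only [Real.sqrt_sq (norm_nonneg _)] at h
  convert h using 1
  ext v
  simp only [smul_apply, coe_innerSL_apply, smul_eq_mul, nsmul_eq_mul, Nat.cast_ofNat]
  field_simp

theorem hasFDerivAt_inv_norm_smul {y : E} (hy : y ≠ 0) :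
    HasFDerivAt (fun z : E => ‖z‖⁻¹ • z)
      (‖y‖⁻¹ • ContinuousLinearMap.id ℝ E - (‖y‖ ^ 3)⁻¹ • (innerSL ℝ y).smulRight y) y := by
  have h := ((hasDerivAt_inv (norm_ne_zero_iff.2 hy)).comp_hasFDerivAt y
    (hasFDerivAt_norm_of_ne_zero hy)).smul (hasFDerivAt_id y)
  refine h.congr_fderiv (ContinuousLinearMap.ext fun v => ?_)
  simp only [Function.comp_apply, id_eq, add_apply, sub_apply, neg_apply, smul_apply, neg_smul,
    ContinuousLinearMap.id_apply, ContinuousLinearMap.smulRight_apply, coe_innerSL_apply,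
    smul_eq_mul]
  module

end InnerProductSpace

theorem contDiffAt_inv_of_ne_zero {𝕜 R : Type*} [NontriviallyNormedField 𝕜]
    [NormedDivisionRing R] [NormedAlgebra 𝕜 R] [CompleteSpace R] {n : WithTop ℕ∞} {x : R}
    (hx : x ≠ 0) : ContDiffAt 𝕜 n Inv.inv x := by
  simpa only [Ring.inverse_eq_inv', Units.val_mk0] using contDiffAt_ringInverse 𝕜 (Units.mk0 x hx)

namespace Quaternion

theorem mul_im_mul_star {R : Type*} [CommRing R] (y q : ℍ[R]) :
    y * q.im * star y = (y * q * star y).im := by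
  ext <;> simp [re_mul, imI_mul, imJ_mul, imK_mul] <;> ring

theorem im_mul_star_comm {R : Type*} [CommRing R] (a b : ℍ[R]) :
    (a * star b).im = -(b * star a).im := by
  rw [← im_star, star_mul, star_star]

theorem self_mul_star_eq_norm_sq_smul_one (y : ℍ[ℝ]) : y * star y = ‖y‖ ^ 2 • (1 : ℍ[ℝ]) := by
  rw [self_mul_star, normSq_eq_norm_mul_self, ← sq, ← coe_one, smul_coe, mul_one]

theorem mul_star_eq_inner_smul_one_add_im (w y : ℍ[ℝ]) :
    w * star y = inner ℝ y w • (1 : ℍ[ℝ]) + (w * star y).im := by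
  rw [real_inner_comm, inner_def, ← coe_one, smul_coe, mul_one, re_add_im]

theorem inv_norm_smul_mul_im_mul_star (y q : ℍ[ℝ]) :
    (‖y‖⁻¹ • y) * q.im * star (‖y‖⁻¹ • y) = (‖y‖ ^ 2)⁻¹ • (y * q * star y).im := by
  rw [star_smul, smul_mul_assoc, mul_smul_comm, smul_mul_assoc, smul_smul, mul_im_mul_star,
    ← mul_inv, ← sq]

@[fun_prop]
theorem contDiff_star {n : WithTop ℕ∞} : ContDiff ℝ n (star : ℍ[ℝ] → ℍ[ℝ]) :=
  (LinearMap.toContinuousLinearMap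
    { toFun := star, map_add' := star_add, map_smul' := Quaternion.star_smul }).contDiff

theorem contDiff_im {n : WithTop ℕ∞} : ContDiff ℝ n (fun q : ℍ[ℝ] => q.im) :=
  (LinearMap.toContinuousLinearMap
    { toFun := fun q : ℍ[ℝ] => q.im, map_add' := im_add,
      map_smul' := fun r q => im_smul q r }).contDiff

end Quaternion

theorem gg_mul_A0_mul_star {x y : ℍ[ℝ]} (hy : y ≠ 0) (u w : ℍ[ℝ]) :
    gg (x, y) * A0 (x, y) (u, w) * star (gg (x, y)) =
      (‖x‖ ^ 2 + ‖y‖ ^ 2)⁻¹ •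
        ((y * x⁻¹ * u * star y).im + (‖x‖ ^ 2 / ‖y‖ ^ 2) • (w * star y).im) := by
  have hA0 : A0 (x, y) (u, w) = ((‖x‖ ^ 2 + ‖y‖ ^ 2)⁻¹ •
      ((‖y‖ ^ 2 : ℝ) • (x⁻¹ * u) + (‖x‖ ^ 2 : ℝ) • (y⁻¹ * w))).im :=
    (im_smul _ _).symm
  rw [gg, hA0, inv_norm_smul_mul_im_mul_star]
  simp only [mul_smul_comm, smul_mul_assoc, mul_add, add_mul, ← mul_assoc, mul_inv_cancel₀ hy,
    one_mul, im_add, im_smul]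
  have : ‖y‖ ≠ 0 := norm_ne_zero_iff.2 hy
  match_scalars <;> field_simp

theorem hasFDerivAt_gg {x y : ℍ[ℝ]} (hy : y ≠ 0) :
    HasFDerivAt gg
      ((‖y‖⁻¹ • ContinuousLinearMap.id ℝ ℍ[ℝ] - (‖y‖ ^ 3)⁻¹ • (innerSL ℝ y).smulRight y).comp
        (ContinuousLinearMap.snd ℝ ℍ[ℝ] ℍ[ℝ])) (x, y) := by
  exact (hasFDerivAt_inv_norm_smul hy).comp (x, y) (hasFDerivAt_snd (𝕜 := ℝ) (p := (x, y)))

theorem fderiv_gg_apply_mul_star {x y : ℍ[ℝ]} (hy : y ≠ 0) (u w : ℍ[ℝ]) :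
    fderiv ℝ gg (x, y) (u, w) * star (gg (x, y)) = (‖y‖ ^ 2)⁻¹ • (w * star y).im := by
  rw [(hasFDerivAt_gg hy).fderiv]
  simp only [gg, ContinuousLinearMap.comp_apply, ContinuousLinearMap.coe_snd', sub_apply,
    smul_apply, ContinuousLinearMap.id_apply, ContinuousLinearMap.smulRight_apply,
    coe_innerSL_apply, Quaternion.star_smul, Algebra.mul_smul_comm]
  conv_lhs => rw [sub_mul, smul_mul_assoc, smul_mul_assoc, smul_mul_assoc,
    self_mul_star_eq_norm_sq_smul_one, mul_star_eq_inner_smul_one_add_im]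
  have : ‖y‖ ≠ 0 := norm_ne_zero_iff.2 hy
  match_scalars
  · field_simp
    ring
  · field_simp

theorem contDiffOn_gauge_transformed_A0 {n : WithTop ℕ∞} (u w : ℍ[ℝ]) :
    ContDiffOn ℝ n
      (fun p : ℍ[ℝ] × ℍ[ℝ] =>
        ((‖p.1‖ ^ 2 + ‖p.2‖ ^ 2)⁻¹ : ℝ) • (p.2 * p.1⁻¹ * u * star p.2 + p.2 * star w).im)
      {p | p.1 ≠ 0} := by
  have hinv : ContDiffOn ℝ n (fun p : ℍ[ℝ] × ℍ[ℝ] => p.1⁻¹) {p | p.1 ≠ 0} := fun p hp =>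
    ((contDiffAt_inv_of_ne_zero hp).comp p contDiffAt_fst).contDiffWithinAt
  have hscalar :
      ContDiffOn ℝ n (fun p : ℍ[ℝ] × ℍ[ℝ] => (‖p.1‖ ^ 2 + ‖p.2‖ ^ 2)⁻¹) {p | p.1 ≠ 0} :=
    ((contDiff_fst.norm_sq ℝ).add (contDiff_snd.norm_sq ℝ)).contDiffOn.inv fun p hp => by
      have : 0 < ‖p.1‖ := norm_pos_iff.2 hp
      positivity
  refine hscalar.smul (contDiff_im.comp_contDiffOn ?_)
  fun_prop

theorem gauge_transformed_A0 :
    (∀ x y : ℍ[ℝ], x ≠ 0 → y ≠ 0 → ∀ u w : ℍ[ℝ],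
      gg (x, y) * A0 (x, y) (u, w) * star (gg (x, y)) -
          fderiv ℝ gg (x, y) (u, w) * star (gg (x, y)) =
        ((‖x‖ ^ 2 + ‖y‖ ^ 2)⁻¹ : ℝ) • (y * x⁻¹ * u * star y + y * star w).im) ∧
    ∀ u w : ℍ[ℝ],
      ContDiffOn ℝ (⊤ : ℕ∞)
        (fun p : ℍ[ℝ] × ℍ[ℝ] =>
          ((‖p.1‖ ^ 2 + ‖p.2‖ ^ 2)⁻¹ : ℝ) •
            (p.2 * p.1⁻¹ * u * star p.2 + p.2 * star w).im)
        {p : ℍ[ℝ] × ℍ[ℝ] | p.1 ≠ 0} := by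
  refine ⟨fun x y _ hy u w => ?_, contDiffOn_gauge_transformed_A0⟩
  rw [gg_mul_A0_mul_star hy, fderiv_gg_apply_mul_star hy, im_add, im_mul_star_comm y w]
  have : ‖y‖ ≠ 0 := norm_ne_zero_iff.2 hy
  match_scalars
  · ring
  · field_simp
    ring
end
end
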